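/- Open-loop SIS, healthy regime (Proposition 1, part 1): Assume A is irreducible and s(BA − Γ) ≤ 0. Then 0 is the unique point y ∈ [0,1]ⁿ with G(y) = 0, and 0 is globally asymptotically stable for the open-loop SIS system on [0,1]ⁿ: (i) for every ε > 0 there exists δ > 0 such that every solution with x(0) ∈ [0,1]ⁿ and ‖x(0)‖ < δ satisfies ‖x(t)‖ < ε for all t ≥ 0, and (ii) every solution with x(0) ∈ [0,1]ⁿ satisfies x(t) → 0 as t → ∞. -/

import Mathlib

open Matrix Filter Topology

/-- Spectral abscissa: the maximum of the real parts of the complex eigenvalues. -/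
noncomputable def specAbs {n : ℕ} (M : Matrix (Fin n) (Fin n) ℝ) : ℝ :=
  sSup (Complex.re '' spectrum ℂ (M.map (Complex.ofReal ·)))

/-- Irreducibility of a matrix. -/
def MatIrreducible {n : ℕ} (A : Matrix (Fin n) (Fin n) ℝ) : Prop :=
  ∀ S : Set (Fin n), S.Nonempty → S ≠ Set.univ → ∃ i ∈ S, ∃ j ∉ S, 0 < A i j

/-- The open-loop SIS vector field. -/
def sisG {n : ℕ} (A : Matrix (Fin n) (Fin n) ℝ) (β γ : Fin n → ℝ)
    (x : Fin n → ℝ) (i : Fin n) : ℝ :=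
  β i * (1 - x i) * (∑ j, A i j * x j) - γ i * x i

/-- A solution of the open-loop SIS system. -/
def IsSolG {n : ℕ} (A : Matrix (Fin n) (Fin n) ℝ) (β γ : Fin n → ℝ)
    (x : ℝ → Fin n → ℝ) : Prop :=
  ∀ t : ℝ, 0 ≤ t → HasDerivWithinAt x (sisG A β γ (x t)) (Set.Ici 0) t

/-!
Shifting `BA - Γ` by a multiple of the identity gives a nonnegative irreducible matrix with
positive diagonal, hence a primitive one, and maximising the Collatz–Wielandt function yields a
positive eigenvector `w` of `BA - Γ`; its eigenvalue is at most `s(BA - Γ) ≤ 0`, so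
`β_i ∑_j A_ij w_j ≤ γ_i w_i`, and irreducibility forces `γ_i > 0`.
On the forward invariant box `[0,1]ⁿ`, at an index maximising `ρ = x_i / w_i` this gives
`G_i(x) ≤ -γ_i x_i²`. Hence at an equilibrium `ρ = 0`, and along a solution `ρ` is dominated by the
solution `q / (1 + c q t)` of `ρ' = -c ρ²`, which gives both stability and convergence.
-/

open Set

section Comparison

variable {ι : Type*} [Fintype ι]

lemma eventually_slope_sup'_lt [Nonempty ι] {f : ι → ℝ → ℝ} {d : ι → ℝ} {t r : ℝ}
    (hf : ∀ i, HasDerivWithinAt (f i) (d i) (Ici t) t)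
    (hr : ∀ i, f i t = Finset.univ.sup' Finset.univ_nonempty (f · t) → d i < r) :
    ∀ᶠ z in 𝓝[>] t, slope (fun s => Finset.univ.sup' Finset.univ_nonempty (f · s)) t z < r := by
  set F := fun s => Finset.univ.sup' Finset.univ_nonempty (f · s)
  have hline : ∀ i, ∀ᶠ z in 𝓝[>] t, f i z < F t + r * (z - t) := by
    intro i
    rcases (Finset.le_sup' (f · t) (Finset.mem_univ i)).eq_or_lt with hmax | hlt
    · have hslope : ∀ᶠ z in 𝓝[>] t, slope (f i) t z < r :=
        ((hasDerivWithinAt_iff_tendsto_slope' (lt_irrefl t)).1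
          (hf i).Ioi_of_Ici).eventually_lt_const (hr i hmax)
      filter_upwards [hslope, self_mem_nhdsWithin] with z hz (htz : t < z)
      rw [slope_def_field, div_lt_iff₀ (sub_pos.2 htz)] at hz
      change f i t = F t at hmax
      linarith
    · have hfi : Tendsto (f i) (𝓝[>] t) (𝓝 (f i t)) :=
        (hf i).continuousWithinAt.mono_left (nhdsWithin_mono t Ioi_subset_Ici_self)
      have hlim : Tendsto (fun z => F t + r * (z - t)) (𝓝[>] t) (𝓝 (F t)) := by
        have : Continuous fun z => F t + r * (z - t) := by fun_prop
        simpa using (this.tendsto t).mono_left nhdsWithin_le_nhds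
      exact hfi.eventually_lt hlim hlt
  filter_upwards [eventually_all.2 hline, self_mem_nhdsWithin] with z hz (htz : t < z)
  obtain ⟨i, -, hi⟩ := Finset.exists_mem_eq_sup' Finset.univ_nonempty (f · z)
  have : F z < F t + r * (z - t) := by simpa only [F, hi] using hz i
  rw [slope_def_field, div_lt_iff₀ (sub_pos.2 htz)]
  linarith

theorem forall_image_le_of_deriv_right_lt_deriv_boundary {f d : ι → ℝ → ℝ} {B B' : ℝ → ℝ}
    {a b : ℝ} (hf : ∀ i, ∀ t ∈ Ico a b, HasDerivWithinAt (f i) (d i t) (Ici t) t)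
    (hfc : ∀ i, ContinuousOn (f i) (Icc a b)) (hB : ContinuousOn B (Icc a b))
    (hB' : ∀ t ∈ Ico a b, HasDerivWithinAt B (B' t) (Ici t) t) (ha : ∀ i, f i a ≤ B a)
    (bound : ∀ t ∈ Ico a b, (∀ j, f j t ≤ B t) → ∀ i, f i t = B t → d i t < B' t) :
    ∀ t ∈ Icc a b, ∀ i, f i t ≤ B t := by
  classical
  cases isEmpty_or_nonempty ι
  · exact fun _ _ i => isEmptyElim i
  set F := fun s => Finset.univ.sup' Finset.univ_nonempty (f · s)
  have hF : ∀ t i, f i t ≤ F t := fun t i => Finset.le_sup' (f · t) (Finset.mem_univ i)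
  have hactive : ∀ t, (Finset.univ.filter fun i => f i t = F t).Nonempty := fun t => by
    obtain ⟨i, -, hi⟩ := Finset.exists_mem_eq_sup' Finset.univ_nonempty (f · t)
    exact ⟨i, Finset.mem_filter.2 ⟨Finset.mem_univ i, hi.symm⟩⟩
  -- `F` has right derivative at most the largest derivative among the active indices
  set D := fun t => (Finset.univ.filter fun i => f i t = F t).sup' (hactive t) (d · t)
  have hFB : ∀ t ∈ Icc a b, F t ≤ B t := by
    refine image_le_of_liminf_slope_right_lt_deriv_boundary' (f' := D)
      (ContinuousOn.finset_sup'_apply _ fun i _ => hfc i) (fun t ht r hr => ?_) ?_ hB hB'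
      fun t ht hFt => ?_
    · refine (eventually_slope_sup'_lt (fun i => hf i t ht) fun i hi => ?_).frequently
      exact lt_of_le_of_lt (Finset.le_sup' (d · t) (Finset.mem_filter.2 ⟨Finset.mem_univ i, hi⟩)) hr
    · obtain ⟨i, -, hi⟩ := Finset.exists_mem_eq_sup' Finset.univ_nonempty (f · a)
      exact hi.trans_le (ha i)
    · refine (Finset.sup'_lt_iff _).2 fun i hi => ?_
      exact bound t ht (fun j => (hF t j).trans hFt.le) i ((Finset.mem_filter.1 hi).2.trans hFt)
  exact fun t ht i => (hF t i).trans (hFB t ht)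

lemma forall_nonpos_of_deriv_le_mul_at_max {f d : ι → ℝ → ℝ} {K : ℝ}
    (hf : ∀ i, ∀ t, 0 ≤ t → HasDerivWithinAt (f i) (d i t) (Ici 0) t) (h0 : ∀ i, f i 0 ≤ 0)
    (hK : ∀ t, 0 ≤ t → ∀ i, 0 < f i t → f i t ≤ 1 → (∀ j, f j t ≤ f i t) → d i t ≤ K * f i t) :
    ∀ t, 0 ≤ t → ∀ i, f i t ≤ 0 := by
  intro T hT i
  set L := |K| + 1
  -- compare with the barrier `η * exp (L * (t - T))`, which stays in `(0, η]` on `[0, T]`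
  have hbarrier : ∀ η, 0 < η → η ≤ 1 → f i T ≤ η := by
    intro η hη hη1
    set B := fun t => η * Real.exp (L * (t - T))
    have hB : ∀ t, HasDerivAt B (L * B t) t := fun t =>
      ((((hasDerivAt_id t).sub_const T).const_mul L).exp.const_mul η).congr_deriv
        (by simp only [B, id]; ring)
    have hle := forall_image_le_of_deriv_right_lt_deriv_boundary (a := 0) (b := T) (B := B)
      (fun i t ht => (hf i t ht.1).mono (Ici_subset_Ici.2 ht.1))
      (fun i t ht => (hf i t ht.1).continuousWithinAt.mono fun s hs => hs.1)
      (fun t _ => (hB t).continuousAt.continuousWithinAt) (fun t _ => (hB t).hasDerivWithinAt)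
      (fun i => (h0 i).trans (by positivity)) ?_ T ⟨hT, le_rfl⟩ i
    · simpa [B] using hle
    intro t ht hall j hj
    have hBpos : 0 < B t := by positivity
    have hB1 : B t ≤ 1 := by
      have : Real.exp (L * (t - T)) ≤ 1 :=
        Real.exp_le_one_iff.2 (mul_nonpos_of_nonneg_of_nonpos (by positivity) (by linarith [ht.2]))
      nlinarith
    calc d j t ≤ K * f j t := hK t ht.1 j (hj ▸ hBpos) (hj ▸ hB1) fun k => hj ▸ hall k
      _ ≤ |K| * B t := by rw [hj]; exact mul_le_mul_of_nonneg_right (le_abs_self K) hBpos.le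
      _ < L * B t := by simp only [L]; linarith
  refine le_of_forall_pos_le_add fun η hη => ?_
  linarith [hbarrier (min η 1) (lt_min hη one_pos) (min_le_right η 1), min_le_left η 1]

end Comparison

section PerronFrobenius

variable {ι : Type*} [Fintype ι]

lemma mulVec_apply_pos_of_pos {Q : Matrix ι ι ℝ} (hQ : ∀ i j, 0 < Q i j) {u : ι → ℝ}
    (hu : 0 < u) (i : ι) : 0 < (Q *ᵥ u) i := by
  obtain ⟨hu0, l, hl⟩ := Pi.lt_def.1 hu
  exact Finset.sum_pos' (fun j _ => mul_nonneg (hQ i j).le (hu0 j))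
    ⟨l, Finset.mem_univ l, mul_pos (hQ i l) hl⟩

noncomputable def collatzWielandt [Nonempty ι] (P : Matrix ι ι ℝ) (v : ι → ℝ) : ℝ :=
  Finset.univ.inf' Finset.univ_nonempty fun i => (P *ᵥ v) i / v i

lemma collatzWielandt_smul [Nonempty ι] (P : Matrix ι ι ℝ) (v : ι → ℝ) {a : ℝ} (ha : a ≠ 0) :
    collatzWielandt P (a • v) = collatzWielandt P v := by
  simp only [collatzWielandt, Matrix.mulVec_smul, Pi.smul_apply, smul_eq_mul,
    mul_div_mul_left _ _ ha]

lemma collatzWielandt_mul_le [Nonempty ι] (P : Matrix ι ι ℝ) {v : ι → ℝ} {i : ι} (hv : 0 < v i) :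
    collatzWielandt P v * v i ≤ (P *ᵥ v) i :=
  (le_div_iff₀ hv).1 (Finset.inf'_le _ (Finset.mem_univ i))

variable [DecidableEq ι]

lemma Matrix.pow_apply_mul_le_pow_succ_apply {P : Matrix ι ι ℝ} (hP : ∀ i j, 0 ≤ P i j)
    (k : ℕ) (i a b : ι) :
    (P ^ k) i a * P a b ≤ (P ^ (k + 1)) i b := by
  rw [pow_succ, Matrix.mul_apply]
  exact Finset.single_le_sum (f := fun l => (P ^ k) i l * P l b)
    (fun l _ => mul_nonneg (Matrix.pow_apply_nonneg hP k i l) (hP l b)) (Finset.mem_univ a)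

theorem exists_pos_eigenvector_of_pow_pos {P : Matrix ι ι ℝ} {k : ℕ}
    (hk : ∀ i j, 0 < (P ^ k) i j) : ∃ w : ι → ℝ, (∀ i, 0 < w i) ∧ ∃ μ : ℝ, P *ᵥ w = μ • w := by
  cases isEmpty_or_nonempty ι
  · exact ⟨0, isEmptyElim, 0, Subsingleton.elim _ _⟩
  set Q := P ^ k
  have hQ : ∀ u ∈ stdSimplex ℝ ι, ∀ i, 0 < (Q *ᵥ u) i := fun u hu =>
    mulVec_apply_pos_of_pos hk <| lt_of_le_of_ne hu.1 fun h => by simpa [← h] using hu.2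
  -- maximize the Collatz–Wielandt function over `Q` applied to the simplex, where it is continuous
  have hcont : ContinuousOn (fun u => collatzWielandt P (Q *ᵥ u)) (stdSimplex ℝ ι) :=
    ContinuousOn.finset_inf'_apply _ fun i _ =>
      ContinuousOn.div (by fun_prop) (by fun_prop) fun u hu => (hQ u hu i).ne'
  obtain ⟨u₀, hu₀, hmax⟩ := (isCompact_stdSimplex ℝ ι).exists_isMaxOn
    ⟨_, single_mem_stdSimplex ℝ (Classical.arbitrary ι)⟩ hcont
  set w := Q *ᵥ u₀
  set μ := collatzWielandt P w
  have hw : ∀ i, 0 < w i := hQ u₀ hu₀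
  refine ⟨w, hw, μ, ?_⟩
  by_contra hne
  have hz : 0 < P *ᵥ w - μ • w := lt_of_le_of_ne
    (fun i => by simpa using collatzWielandt_mul_le P (hw i))
    fun h => hne (sub_eq_zero.1 h.symm)
  have hQw : ∀ i, 0 < (Q *ᵥ w) i :=
    mulVec_apply_pos_of_pos hk (Pi.lt_def.2 ⟨fun i => (hw i).le, Classical.arbitrary ι, hw _⟩)
  have hcomm : P *ᵥ (Q *ᵥ w) - μ • (Q *ᵥ w) = Q *ᵥ (P *ᵥ w - μ • w) := by
    rw [Matrix.mulVec_sub, Matrix.mulVec_smul, Matrix.mulVec_mulVec w P Q,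
      Matrix.mulVec_mulVec w Q P, (Commute.self_pow P k).eq]
  have hlt : μ < collatzWielandt P (Q *ᵥ w) := by
    refine (Finset.lt_inf'_iff _).2 fun i _ => (lt_div_iff₀ (hQw i)).2 ?_
    have := congrFun hcomm i
    simp only [Pi.sub_apply, Pi.smul_apply, smul_eq_mul] at this
    linarith [mulVec_apply_pos_of_pos hk hz i]
  have hsum : 0 < ∑ i, w i := Finset.sum_pos (fun i _ => hw i) Finset.univ_nonempty
  have hsimplex : (∑ i, w i)⁻¹ • w ∈ stdSimplex ℝ ι :=
    ⟨fun i => by simpa using mul_nonneg (inv_nonneg.2 hsum.le) (hw i).le,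
      by simp [← Finset.mul_sum, hsum.ne']⟩
  have hle : collatzWielandt P (Q *ᵥ ((∑ i, w i)⁻¹ • w)) ≤ μ := hmax hsimplex
  rw [Matrix.mulVec_smul, collatzWielandt_smul P _ (inv_ne_zero hsum.ne')] at hle
  exact hlt.not_ge hle

end PerronFrobenius

lemma exists_pow_pos_of_matIrreducible {n : ℕ} {P : Matrix (Fin n) (Fin n) ℝ}
    (hP : ∀ i j, 0 ≤ P i j) (hdiag : ∀ i, 0 < P i i) (hirr : MatIrreducible P) :
    ∃ k, ∀ i j, 0 < (P ^ k) i j := by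
  have hstep : ∀ k i a b, 0 < (P ^ k) i a → 0 < P a b → 0 < (P ^ (k + 1)) i b :=
    fun k i a b hia hab => (mul_pos hia hab).trans_le (P.pow_apply_mul_le_pow_succ_apply hP k i a b)
  have hmono : ∀ i j k m, k ≤ m → 0 < (P ^ k) i j → 0 < (P ^ m) i j := by
    intro i j k m hkm hk
    induction m, hkm using Nat.le_induction with
    | base => exact hk
    | succ m _ ih => exact hstep m i j j ih (hdiag j)
  -- the indices reachable from `i` admit no outgoing positive entry, so they are all indices
  have hreach : ∀ i j, ∃ k, 0 < (P ^ k) i j := by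
    intro i
    by_contra! h
    obtain ⟨j, hj⟩ := h
    obtain ⟨a, ⟨k, hk⟩, b, hb, hab⟩ := hirr {j | ∃ k, 0 < (P ^ k) i j} ⟨i, 0, by simp⟩
      fun huniv => by obtain ⟨k, hk⟩ := huniv ▸ Set.mem_univ j; exact (hj k).not_gt hk
    exact hb ⟨k + 1, hstep k i a b hk hab⟩
  choose K hK using hreach
  refine ⟨∑ i, ∑ j, K i j, fun i j => hmono i j _ _ ?_ (hK i j)⟩
  exact (Finset.single_le_sum (f := K i) (fun _ _ => Nat.zero_le _) (Finset.mem_univ j)).trans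
    (Finset.single_le_sum (f := fun i => ∑ j, K i j) (fun _ _ => Nat.zero_le _) (Finset.mem_univ i))

lemma le_specAbs_of_mulVec_eq_smul {n : ℕ} {M : Matrix (Fin n) (Fin n) ℝ} {w : Fin n → ℝ}
    (hw : w ≠ 0) {μ : ℝ} (h : M *ᵥ w = μ • w) : μ ≤ specAbs M := by
  set M' := M.map (Complex.ofReal ·)
  have hM' : M' *ᵥ (Complex.ofReal ∘ w) = (μ : ℂ) • (Complex.ofReal ∘ w) := by
    ext i
    refine (RingHom.map_mulVec Complex.ofRealHom M w i).symm.trans ?_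
    simp [h]
  have hmem : (μ : ℂ) ∈ spectrum ℂ M' := by
    rw [← Matrix.spectrum_toLin']
    refine (Module.End.hasEigenvalue_of_hasEigenvector (x := Complex.ofReal ∘ w)
      ⟨Module.End.mem_eigenspace_iff.2 ?_, fun h0 => hw ?_⟩).mem_spectrum
    · rw [Matrix.toLin'_apply, hM']
    · exact funext fun i => by simpa using congrFun h0 i
  exact le_csSup ((M'.finite_spectrum.image _).bddAbove) ⟨_, hmem, Complex.ofReal_re μ⟩

lemma exists_pos_eigenvector_of_offDiag_nonneg {n : ℕ} {M : Matrix (Fin n) (Fin n) ℝ}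
    (hM : ∀ i j, i ≠ j → 0 ≤ M i j) (hirr : MatIrreducible M) :
    ∃ w : Fin n → ℝ, (∀ i, 0 < w i) ∧ ∃ μ : ℝ, M *ᵥ w = μ • w := by
  set c := 1 + ∑ i, |M i i|
  have hc : ∀ i, 0 < M i i + c := fun i => by
    have := Finset.single_le_sum (f := fun i => |M i i|) (fun i _ => abs_nonneg _)
      (Finset.mem_univ i)
    linarith [neg_abs_le (M i i)]
  set P := M + c • (1 : Matrix (Fin n) (Fin n) ℝ)
  have hPoff : ∀ i j, i ≠ j → P i j = M i j := fun i j hij => by simp [P, hij]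
  have hPdiag : ∀ i, P i i = M i i + c := fun i => by simp [P]
  have hP : ∀ i j, 0 ≤ P i j := fun i j => by
    rcases eq_or_ne i j with rfl | hij
    · exact hPdiag i ▸ (hc i).le
    · exact hPoff i j hij ▸ hM i j hij
  have hPirr : MatIrreducible P := fun S hS hSu => by
    obtain ⟨i, hi, j, hj, hij⟩ := hirr S hS hSu
    exact ⟨i, hi, j, hj, hPoff i j (ne_of_mem_of_not_mem hi hj) ▸ hij⟩
  obtain ⟨k, hk⟩ := exists_pow_pos_of_matIrreducible hP (fun i => hPdiag i ▸ hc i) hPirr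
  obtain ⟨w, hw, μ, hPw⟩ := exists_pos_eigenvector_of_pow_pos hk
  refine ⟨w, hw, μ - c, ?_⟩
  rw [sub_smul, ← hPw, Matrix.add_mulVec, Matrix.smul_mulVec, Matrix.one_mulVec,
    add_sub_cancel_right]

lemma exists_one_le_mulVec_nonpos_of_specAbs_nonpos {n : ℕ} [Nonempty (Fin n)]
    {M : Matrix (Fin n) (Fin n) ℝ} (hM : ∀ i j, i ≠ j → 0 ≤ M i j) (hirr : MatIrreducible M)
    (hs : specAbs M ≤ 0) : ∃ w : Fin n → ℝ, (∀ i, 1 ≤ w i) ∧ ∀ i, (M *ᵥ w) i ≤ 0 := by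
  obtain ⟨w, hw, μ, hMw⟩ := exists_pos_eigenvector_of_offDiag_nonneg hM hirr
  have hμ : μ ≤ 0 := (le_specAbs_of_mulVec_eq_smul
    (fun h => (hw (Classical.arbitrary _)).ne' (congrFun h _)) hMw).trans hs
  obtain ⟨i₀, hi₀⟩ := Finite.exists_min w
  refine ⟨(w i₀)⁻¹ • w, fun i => (one_le_inv_mul₀ (hw i₀)).2 (hi₀ i), fun i => ?_⟩
  rw [Matrix.mulVec_smul, hMw, Pi.smul_apply, Pi.smul_apply, smul_eq_mul, smul_eq_mul]
  exact mul_nonpos_of_nonneg_of_nonpos (inv_nonneg.2 (hw i₀).le)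
    (mul_nonpos_of_nonpos_of_nonneg hμ (hw i).le)

lemma diagonal_mul_sub_diagonal_mulVec_apply {n : ℕ} (A : Matrix (Fin n) (Fin n) ℝ)
    (β γ w : Fin n → ℝ) (i : Fin n) :
    ((Matrix.diagonal β * A - Matrix.diagonal γ) *ᵥ w) i = β i * ∑ j, A i j * w j - γ i * w i := by
  rw [Matrix.sub_mulVec, ← Matrix.mulVec_mulVec, Pi.sub_apply, Matrix.mulVec_diagonal,
    Matrix.mulVec_diagonal]
  rfl

lemma exists_one_le_mul_sum_le_of_specAbs_nonpos {n : ℕ} [Nonempty (Fin n)]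
    {A : Matrix (Fin n) (Fin n) ℝ} {β γ : Fin n → ℝ} (hA : ∀ i j, 0 ≤ A i j)
    (hirr : MatIrreducible A) (hβ : ∀ i, 0 < β i)
    (hs : specAbs (Matrix.diagonal β * A - Matrix.diagonal γ) ≤ 0) :
    ∃ w : Fin n → ℝ, (∀ i, 1 ≤ w i) ∧ ∀ i, β i * ∑ j, A i j * w j ≤ γ i * w i := by
  obtain ⟨w, hw1, hMw⟩ := exists_one_le_mulVec_nonpos_of_specAbs_nonpos
    (fun i j hij => by simpa [hij] using mul_nonneg (hβ i).le (hA i j))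
    (fun S hS hSu => by
      obtain ⟨i, hi, j, hj, hij⟩ := hirr S hS hSu
      exact ⟨i, hi, j, hj, by simpa [ne_of_mem_of_not_mem hi hj] using mul_pos (hβ i) hij⟩) hs
  exact ⟨w, hw1, fun i => by linarith [hMw i, diagonal_mul_sub_diagonal_mulVec_apply A β γ w i]⟩

lemma MatIrreducible.exists_pos {n : ℕ} (hn : 2 ≤ n) {A : Matrix (Fin n) (Fin n) ℝ}
    (hirr : MatIrreducible A) (i : Fin n) : ∃ j, 0 < A i j := by
  have : Nontrivial (Fin n) := Fin.nontrivial_iff_two_le.2 hn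
  obtain ⟨k, hk⟩ := exists_ne i
  obtain ⟨_, rfl, j, -, hij⟩ := hirr {i} (Set.singleton_nonempty i)
    fun h => hk (h ▸ Set.mem_univ k : k ∈ ({i} : Set (Fin n)))
  exact ⟨j, hij⟩

lemma MatIrreducible.pos_of_mul_sum_le {n : ℕ} (hn : 2 ≤ n) {A : Matrix (Fin n) (Fin n) ℝ}
    (hirr : MatIrreducible A) (hA : ∀ i j, 0 ≤ A i j) {β γ w : Fin n → ℝ} (hβ : ∀ i, 0 < β i)
    (hw0 : ∀ i, 0 < w i) (hw : ∀ i, β i * ∑ j, A i j * w j ≤ γ i * w i) (i : Fin n) :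
    0 < γ i := by
  obtain ⟨j, hij⟩ := hirr.exists_pos hn i
  have hAw : 0 < ∑ j, A i j * w j := Finset.sum_pos' (fun k _ => mul_nonneg (hA i k) (hw0 k).le)
    ⟨j, Finset.mem_univ j, mul_pos hij (hw0 j)⟩
  exact pos_of_mul_pos_left ((mul_pos (hβ i) hAw).trans_le (hw i)) (hw0 i).le

lemma exists_pos_forall_lt_of_forall_pos {ι : Type*} [Finite ι] [Nonempty ι] {a : ι → ℝ}
    (ha : ∀ i, 0 < a i) : ∃ c, 0 < c ∧ ∀ i, c < a i := by
  obtain ⟨i₀, hi₀⟩ := Finite.exists_min a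
  exact ⟨a i₀ / 2, half_pos (ha i₀), fun i => by linarith [hi₀ i, ha i₀]⟩

section SIS

variable {n : ℕ} {A : Matrix (Fin n) (Fin n) ℝ} {β γ : Fin n → ℝ}

lemma IsSolG.hasDerivWithinAt_apply {x : ℝ → Fin n → ℝ} (hx : IsSolG A β γ x) {t : ℝ}
    (ht : 0 ≤ t) (i : Fin n) :
    HasDerivWithinAt (fun s => x s i) (sisG A β γ (x t) i) (Ici 0) t :=
  hasDerivWithinAt_pi.1 (hx t ht) i

lemma neg_mul_sum_le_sum_mul (hA : ∀ i j, 0 ≤ A i j) {x : Fin n → ℝ} {ρ : ℝ}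
    (hx : ∀ j, -ρ ≤ x j) (i : Fin n) : -(ρ * ∑ j, A i j) ≤ ∑ j, A i j * x j := by
  rw [Finset.mul_sum, ← Finset.sum_neg_distrib]
  exact Finset.sum_le_sum fun j _ => by nlinarith [hA i j, hx j]

lemma neg_sisG_le_of_forall_neg_le (hA : ∀ i j, 0 ≤ A i j) (hβ : ∀ i, 0 ≤ β i)
    (hγ : ∀ i, 0 ≤ γ i) {x : Fin n → ℝ} {ρ : ℝ} (hρ : 0 ≤ ρ) (hρ1 : ρ ≤ 1)
    (hx : ∀ j, -ρ ≤ x j) {i : Fin n} (hxi : x i = -ρ) :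
    -sisG A β γ x i ≤ 2 * (β i * ∑ j, A i j) * ρ := by
  have hS := neg_mul_sum_le_sum_mul hA hx i
  have hrow : 0 ≤ β i * ∑ j, A i j := mul_nonneg (hβ i) (Finset.sum_nonneg fun j _ => hA i j)
  simp only [sisG, hxi]
  nlinarith [mul_nonneg (mul_nonneg (hβ i) (by linarith : 0 ≤ 1 + ρ))
    (by linarith : 0 ≤ ∑ j, A i j * x j + ρ * ∑ j, A i j),
    mul_nonneg (mul_nonneg hrow hρ) (sub_nonneg.2 hρ1), mul_nonneg (hγ i) hρ]

lemma sisG_le_of_forall_neg_le (hA : ∀ i j, 0 ≤ A i j) (hβ : ∀ i, 0 ≤ β i)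
    (hγ : ∀ i, 0 ≤ γ i) {x : Fin n → ℝ} {ρ : ℝ} (hρ : 0 ≤ ρ) (hρ1 : ρ ≤ 1)
    (hx : ∀ j, -ρ ≤ x j) {i : Fin n} (hxi : x i = 1 + ρ) :
    sisG A β γ x i ≤ 2 * (β i * ∑ j, A i j) * ρ := by
  have hS := neg_mul_sum_le_sum_mul hA hx i
  have hrow : 0 ≤ β i * ∑ j, A i j := mul_nonneg (hβ i) (Finset.sum_nonneg fun j _ => hA i j)
  simp only [sisG, hxi]
  nlinarith [mul_nonneg (mul_nonneg (hβ i) hρ)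
    (by linarith : 0 ≤ ∑ j, A i j * x j + ρ * ∑ j, A i j),
    mul_nonneg (mul_nonneg hrow hρ) (by linarith : 0 ≤ 2 - ρ), mul_nonneg (hγ i) hρ, hγ i]

lemma IsSolG.mem_Icc (hA : ∀ i j, 0 ≤ A i j) (hβ : ∀ i, 0 ≤ β i) (hγ : ∀ i, 0 ≤ γ i)
    {x : ℝ → Fin n → ℝ} (hx : IsSolG A β γ x) (hx0 : ∀ i, x 0 i ∈ Icc (0 : ℝ) 1) :
    ∀ t, 0 ≤ t → ∀ i, x t i ∈ Icc (0 : ℝ) 1 := by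
  set K := ∑ i, 2 * (β i * ∑ j, A i j)
  have hK : ∀ i, 2 * (β i * ∑ j, A i j) ≤ K := fun i =>
    Finset.single_le_sum (f := fun i => 2 * (β i * ∑ j, A i j))
      (fun k _ => mul_nonneg zero_le_two (mul_nonneg (hβ k) (Finset.sum_nonneg fun j _ => hA k j)))
      (Finset.mem_univ i)
  -- the excursions below `0` and above `1`, as one family
  have hnonpos := forall_nonpos_of_deriv_le_mul_at_max (K := K)
    (f := Sum.elim (fun i t => -x t i) (fun i t => x t i - 1))
    (d := Sum.elim (fun i t => -sisG A β γ (x t) i) (fun i t => sisG A β γ (x t) i))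
    (by
      rintro (i | i) t ht
      · exact (hx.hasDerivWithinAt_apply ht i).neg
      · exact (hx.hasDerivWithinAt_apply ht i).sub_const 1)
    (by
      rintro (i | i) <;> simp only [Sum.elim_inl, Sum.elim_inr] <;>
        linarith [(hx0 i).1, (hx0 i).2])
    (by
      rintro t ht (i | i) hpos hle1 hmax <;>
        simp only [Sum.elim_inl, Sum.elim_inr] at hpos hle1 hmax ⊢
      · exact (neg_sisG_le_of_forall_neg_le hA hβ hγ hpos.le hle1
          (fun j => neg_le.1 (hmax (.inl j))) (neg_neg _).symm).trans
          (mul_le_mul_of_nonneg_right (hK i) hpos.le)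
      · exact (sisG_le_of_forall_neg_le hA hβ hγ hpos.le hle1
          (fun j => neg_le.1 (hmax (.inl j))) (by ring)).trans
          (mul_le_mul_of_nonneg_right (hK i) hpos.le))
  intro t ht i
  have hlow := hnonpos t ht (.inl i)
  have hup := hnonpos t ht (.inr i)
  simp only [Sum.elim_inl, Sum.elim_inr] at hlow hup
  exact ⟨by linarith, by linarith⟩

lemma sisG_le_neg_mul_sq (hA : ∀ i j, 0 ≤ A i j) (hβ : ∀ i, 0 ≤ β i) {w y : Fin n → ℝ}
    (hw : ∀ i, β i * ∑ j, A i j * w j ≤ γ i * w i) {ρ : ℝ} (hρ : 0 ≤ ρ)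
    (hy : ∀ j, y j ≤ ρ * w j) {i : Fin n} (hyi : y i = ρ * w i) (hyi1 : y i ≤ 1) :
    sisG A β γ y i ≤ -(γ i * y i ^ 2) := by
  have hinfect : β i * ∑ j, A i j * y j ≤ γ i * y i := calc
    β i * ∑ j, A i j * y j ≤ β i * ∑ j, A i j * (ρ * w j) :=
      mul_le_mul_of_nonneg_left (Finset.sum_le_sum fun j _ =>
        mul_le_mul_of_nonneg_left (hy j) (hA i j)) (hβ i)
    _ = ρ * (β i * ∑ j, A i j * w j) := by
      rw [Finset.mul_sum, Finset.mul_sum, Finset.mul_sum]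
      exact Finset.sum_congr rfl fun j _ => by ring
    _ ≤ ρ * (γ i * w i) := mul_le_mul_of_nonneg_left (hw i) hρ
    _ = γ i * y i := by rw [hyi]; ring
  have := mul_le_mul_of_nonneg_left hinfect (sub_nonneg.2 hyi1)
  simp only [sisG]
  nlinarith

lemma eq_zero_of_sisG_eq_zero (hA : ∀ i j, 0 ≤ A i j) (hβ : ∀ i, 0 ≤ β i) (hγ : ∀ i, 0 < γ i)
    {w : Fin n → ℝ} (hw0 : ∀ i, 0 < w i) (hw : ∀ i, β i * ∑ j, A i j * w j ≤ γ i * w i)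
    {y : Fin n → ℝ} (hy : ∀ i, y i ∈ Icc (0 : ℝ) 1) (hG : sisG A β γ y = 0) : y = 0 := by
  by_contra hne
  obtain ⟨k, hk⟩ : ∃ k, 0 < y k := by
    by_contra! h
    exact hne (funext fun k => le_antisymm (h k) (hy k).1)
  have : Nonempty (Fin n) := ⟨k⟩
  obtain ⟨i, hi⟩ := Finite.exists_max fun j => y j / w j
  have hρ : 0 < y i / w i := (div_pos hk (hw0 k)).trans_le (hi k)
  have hyi : 0 < y i := (div_pos_iff_of_pos_right (hw0 i)).1 hρ
  have hle := sisG_le_neg_mul_sq hA hβ hw hρ.le (fun j => (div_le_iff₀ (hw0 j)).1 (hi j))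
    (div_mul_cancel₀ _ (hw0 i).ne').symm (hy i).2
  rw [hG, Pi.zero_apply] at hle
  linarith [mul_pos (hγ i) (pow_pos hyi 2)]

lemma IsSolG.le_div_one_add_mul_mul (hA : ∀ i j, 0 ≤ A i j) (hβ : ∀ i, 0 ≤ β i)
    {w : Fin n → ℝ} (hw0 : ∀ i, 0 < w i) (hw : ∀ i, β i * ∑ j, A i j * w j ≤ γ i * w i)
    {c : ℝ} (hc0 : 0 ≤ c) (hc : ∀ i, c < γ i * w i)
    {x : ℝ → Fin n → ℝ} (hx : IsSolG A β γ x) (hx1 : ∀ t, 0 ≤ t → ∀ i, x t i ≤ 1)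
    {q : ℝ} (hq : 0 < q) (hx0 : ∀ i, x 0 i ≤ q * w i) :
    ∀ t, 0 ≤ t → ∀ i, x t i ≤ q / (1 + c * q * t) * w i := by
  intro T hT i
  set B := fun t => q / (1 + c * q * t)
  have hden : ∀ t, 0 ≤ t → 0 < 1 + c * q * t := fun t ht => by positivity
  have hB : ∀ t, 0 ≤ t → HasDerivAt B (-(c * B t ^ 2)) t := fun t ht =>
    ((((hasDerivAt_id t).const_mul (c * q)).const_add 1).inv (hden t ht).ne').const_mul q
      |>.congr_deriv (by simp only [B, id]; field_simp)
  have hle := forall_image_le_of_deriv_right_lt_deriv_boundary (a := 0) (b := T) (B := B)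
    (f := fun i t => x t i / w i) (d := fun i t => sisG A β γ (x t) i / w i)
    (fun i t ht => ((hx.hasDerivWithinAt_apply ht.1 i).div_const (w i)).mono
      (Ici_subset_Ici.2 ht.1))
    (fun i t ht => ((hx.hasDerivWithinAt_apply ht.1 i).continuousWithinAt.mono
      fun s hs => hs.1).div_const (w i))
    (fun t ht => (hB t ht.1).continuousAt.continuousWithinAt)
    (fun t ht => (hB t ht.1).hasDerivWithinAt)
    (fun i => by simpa [B, div_le_iff₀ (hw0 i)] using hx0 i) ?_ T ⟨hT, le_rfl⟩ i
  · exact (div_le_iff₀ (hw0 i)).1 hle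
  intro t ht hall j hj
  have hρ : 0 < B t := div_pos hq (hden t ht.1)
  have hxj : x t j = B t * w j := (div_eq_iff (hw0 j).ne').1 hj
  have hsis := sisG_le_neg_mul_sq hA hβ hw hρ.le (fun k => (div_le_iff₀ (hw0 k)).1 (hall k))
    hxj (hx1 t ht.1 j)
  rw [div_lt_iff₀ (hw0 j)]
  rw [hxj] at hsis
  nlinarith [mul_lt_mul_of_pos_right (hc j) (mul_pos (pow_pos hρ 2) (hw0 j))]

lemma IsSolG.norm_le_div_one_add_mul (hA : ∀ i j, 0 ≤ A i j) (hβ : ∀ i, 0 ≤ β i) (hγ : ∀ i, 0 ≤ γ i)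
    {w : Fin n → ℝ} (hw1 : ∀ i, 1 ≤ w i) (hw : ∀ i, β i * ∑ j, A i j * w j ≤ γ i * w i)
    {c : ℝ} (hc0 : 0 ≤ c) (hc : ∀ i, c < γ i * w i)
    {x : ℝ → Fin n → ℝ} (hx : IsSolG A β γ x) (hx0 : ∀ i, x 0 i ∈ Icc (0 : ℝ) 1)
    {q : ℝ} (hq : 0 < q) (hxq : ∀ i, x 0 i ≤ q) :
    ∀ t, 0 ≤ t → ‖x t‖ ≤ q * ‖w‖ / (1 + c * q * t) := by
  intro t ht
  have hbox := hx.mem_Icc hA hβ hγ hx0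
  have hdecay := hx.le_div_one_add_mul_mul hA hβ (fun i => one_pos.trans_le (hw1 i)) hw hc0 hc
    (fun t ht i => (hbox t ht i).2) hq
    (fun i => (hxq i).trans (le_mul_of_one_le_right hq.le (hw1 i)))
  refine (pi_norm_le_iff_of_nonneg (by positivity)).2 fun i => ?_
  rw [Real.norm_eq_abs, abs_of_nonneg (hbox t ht i).1, mul_div_right_comm]
  exact (hdecay t ht i).trans (mul_le_mul_of_nonneg_left
    ((Real.le_norm_self _).trans (norm_le_pi_norm w i)) (by positivity))

end SIS

theorem stmt5 {n : ℕ} (hn : 2 ≤ n) (A : Matrix (Fin n) (Fin n) ℝ)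
    (hA : ∀ i j, 0 ≤ A i j) (hirr : MatIrreducible A)
    (β γ : Fin n → ℝ) (hβ : ∀ i, 0 < β i) (hγ : ∀ i, 0 ≤ γ i)
    (hs : specAbs (Matrix.diagonal β * A - Matrix.diagonal γ) ≤ 0) :
    (sisG A β γ 0 = 0) ∧
    (∀ y : Fin n → ℝ, (∀ i, y i ∈ Set.Icc 0 1) → sisG A β γ y = 0 → y = 0) ∧
    (∀ ε > 0, ∃ δ > 0, ∀ x : ℝ → Fin n → ℝ, IsSolG A β γ x →
      (∀ i, x 0 i ∈ Set.Icc (0:ℝ) 1) → ‖x 0‖ < δ →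
      ∀ t : ℝ, 0 ≤ t → ‖x t‖ < ε) ∧
    (∀ x : ℝ → Fin n → ℝ, IsSolG A β γ x →
      (∀ i, x 0 i ∈ Set.Icc (0:ℝ) 1) →
      Tendsto x atTop (𝓝 0)) := by
  have : Nonempty (Fin n) := ⟨⟨0, by omega⟩⟩
  have hβ0 : ∀ i, 0 ≤ β i := fun i => (hβ i).le
  obtain ⟨w, hw1, hw⟩ := exists_one_le_mul_sum_le_of_specAbs_nonpos hA hirr hβ hs
  have hw0 : ∀ i, 0 < w i := fun i => one_pos.trans_le (hw1 i)
  have hγ0 := hirr.pos_of_mul_sum_le hn hA hβ hw0 hw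
  obtain ⟨c, hc0, hc⟩ := exists_pos_forall_lt_of_forall_pos fun i => mul_pos (hγ0 i) (hw0 i)
  refine ⟨funext fun i => by simp [sisG],
    fun y hy hG => eq_zero_of_sisG_eq_zero hA hβ0 hγ0 hw0 hw hy hG, fun ε hε => ?_,
    fun x hx hx0 => ?_⟩
  · refine ⟨ε / (‖w‖ + 1), by positivity, fun x hx hx0 hδ t ht => ?_⟩
    have hxδ : ∀ i, x 0 i ≤ ε / (‖w‖ + 1) := fun i =>
      (Real.le_norm_self _).trans ((norm_le_pi_norm (x 0) i).trans hδ.le)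
    calc ‖x t‖ ≤ ε / (‖w‖ + 1) * ‖w‖ / (1 + c * (ε / (‖w‖ + 1)) * t) :=
          hx.norm_le_div_one_add_mul hA hβ0 hγ hw1 hw hc0.le hc hx0 (by positivity) hxδ t ht
      _ ≤ ε / (‖w‖ + 1) * ‖w‖ :=
          div_le_self (by positivity) (le_add_of_nonneg_right (by positivity))
      _ < ε := by rw [div_mul_eq_mul_div, div_lt_iff₀ (by positivity)]; nlinarith
  · refine squeeze_zero_norm' ((eventually_ge_atTop 0).mono fun t ht =>
      hx.norm_le_div_one_add_mul hA hβ0 hγ hw1 hw hc0.le hc hx0 one_pos (fun i => (hx0 i).2) t ht)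
      (tendsto_const_nhds.div_atTop (tendsto_atTop_add_const_left _ 1
        (tendsto_id.const_mul_atTop (by positivity))))
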